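/- arXiv:2412.14896 — 3 statements merged into one kernel-verified Lean document; each statement's English description precedes it below -/
import Mathlib

section
/- Let μ be a non-zero, finite, compactly supported Borel measure on ℝ^d. Suppose there exist q > 1 and a constant C ≥ 0 such that ‖(fμ)^‖_{L^q(ℝ^d)} ≤ C ‖f‖_{L²(μ)} for all f ∈ L²(μ). Then μ̂(ξ) → 0 as |ξ| → ∞. -/
/-!
Since `μ` has compact support, `μ̂` is Lipschitz, hence uniformly continuous; and testing the
extension estimate on `f = 1` shows `μ̂ ∈ L^q`. A uniformly continuous `L^q` function on `ℝ^d`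
must vanish at infinity: if `|μ̂| ≥ ε` at points escaping to infinity, then `|μ̂| ≥ ε/2` on balls
of a fixed radius around them, and these balls carry a fixed positive amount of the finite measure
`|μ̂|^q dξ`, contradicting its tightness.
-/

open MeasureTheory ENNReal

noncomputable def mFT {d : ℕ} (μ : Measure (EuclideanSpace ℝ (Fin d)))
    (ξ : EuclideanSpace ℝ (Fin d)) : ℂ :=
  ∫ x, Complex.exp (-2 * Real.pi * Complex.I * ((inner ℝ ξ x : ℝ) : ℂ)) ∂μ

noncomputable def fmFT {d : ℕ} (f : EuclideanSpace ℝ (Fin d) → ℂ)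
    (μ : Measure (EuclideanSpace ℝ (Fin d))) (ξ : EuclideanSpace ℝ (Fin d)) : ℂ :=
  ∫ x, Complex.exp (-2 * Real.pi * Complex.I * ((inner ℝ ξ x : ℝ) : ℂ)) * f x ∂μ

open Filter Topology Metric Bornology

theorem Metric.tendsto_ball_cobounded_smallSets {X : Type*} [PseudoMetricSpace X] (δ : ℝ) :
    Tendsto (fun x : X ↦ ball x δ) (cobounded X) (cobounded X).smallSets := by
  rw [tendsto_smallSets_iff]
  intro t ht
  have hbdd : IsBounded (thickening δ tᶜ) := (isBounded_compl_iff.2 ht).thickening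
  filter_upwards [hbdd] with x hx y hy
  by_contra hyt
  exact hx (mem_thickening_iff.2 ⟨y, hyt, by rwa [dist_comm, ← mem_ball]⟩)

theorem MeasureTheory.tendsto_measure_ball_cobounded {X : Type*} [MetricSpace X] [ProperSpace X]
    [MeasurableSpace X] [BorelSpace X] (ν : Measure X) [IsFiniteMeasure ν] (δ : ℝ) :
    Tendsto (fun x ↦ ν (ball x δ)) (cobounded X) (𝓝 0) := by
  have hν : Tendsto ν (cocompact X).smallSets (𝓝 0) := by
    simpa [IsTightMeasureSet] using isTightMeasureSet_singleton (μ := ν)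
  exact hν.comp (cobounded_eq_cocompact (α := X) ▸ tendsto_ball_cobounded_smallSets δ)

theorem MeasureTheory.MemLp.tendsto_zero_cobounded_of_uniformContinuous {E F : Type*}
    [NormedAddCommGroup E] [NormedSpace ℝ E] [FiniteDimensional ℝ E] [MeasurableSpace E]
    [BorelSpace E] {μ : Measure E} [μ.IsAddHaarMeasure] [NormedAddCommGroup F] {f : E → F}
    {p : ℝ≥0∞} (hp0 : p ≠ 0) (hp : p ≠ ∞) (hfp : MemLp f p μ) (hf : UniformContinuous f) :
    Tendsto f (cobounded E) (𝓝 0) := by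
  set ν := μ.withDensity fun x ↦ ‖f x‖ₑ ^ p.toReal
  have : IsFiniteMeasure ν :=
    isFiniteMeasure_withDensity (lintegral_rpow_enorm_lt_top_of_eLpNorm_lt_top hp0 hp hfp.2).ne
  rw [Metric.tendsto_nhds]
  intro ε hε
  obtain ⟨δ, hδ, hfδ⟩ := Metric.uniformContinuous_iff.1 hf (ε / 2) (half_pos hε)
  set c := ENNReal.ofReal (ε / 2) ^ p.toReal * μ (ball 0 δ)
  have hc : 0 < c := by
    refine ENNReal.mul_pos (ENNReal.rpow_pos (by simpa using hε) ofReal_ne_top).ne'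
      (measure_ball_pos μ 0 hδ).ne'
  filter_upwards [(tendsto_measure_ball_cobounded ν δ).eventually (gt_mem_nhds hc)] with x hx
  rw [dist_zero_right]
  by_contra! hfx
  refine hx.not_ge ?_
  calc c = ∫⁻ _ in ball x δ, ENNReal.ofReal (ε / 2) ^ p.toReal ∂μ := by
        rw [setLIntegral_const, Measure.addHaar_ball_center]
    _ ≤ ∫⁻ y in ball x δ, ‖f y‖ₑ ^ p.toReal ∂μ := by
        refine setLIntegral_mono' measurableSet_ball fun y hy ↦ ?_
        have hfy : dist (f y) (f x) < ε / 2 := hfδ hy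
        have : ε / 2 ≤ ‖f y‖ := by
          have := norm_sub_norm_le (f x) (f y)
          rw [← dist_eq_norm, dist_comm] at this
          linarith
        rw [← ofReal_norm]
        gcongr
    _ = ν (ball x δ) := (withDensity_apply _ measurableSet_ball).symm

theorem Complex.norm_exp_ofReal_mul_I_sub_exp_ofReal_mul_I_le (a b : ℝ) :
    ‖exp (a * I) - exp (b * I)‖ ≤ |a - b| := by
  have : exp (a * I) - exp (b * I) = exp (b * I) * (exp (I * ↑(a - b)) - 1) := by
    rw [mul_sub, mul_one, ← exp_add]
    push_cast
    ring_nf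
  rw [this, norm_mul, norm_exp_ofReal_mul_I, one_mul, ← Real.norm_eq_abs]
  exact Real.norm_exp_I_mul_ofReal_sub_one_le

theorem Complex.neg_two_mul_pi_mul_I_mul_ofReal (t : ℝ) :
    -2 * Real.pi * I * (t : ℂ) = ((-2 * Real.pi * t : ℝ) : ℂ) * I := by
  push_cast
  ring

section FourierTransform

variable {d : ℕ}

theorem integrable_fourierKernel (μ : Measure (EuclideanSpace ℝ (Fin d))) [IsFiniteMeasure μ]
    (ξ : EuclideanSpace ℝ (Fin d)) :
    Integrable (fun x ↦ Complex.exp (-2 * Real.pi * Complex.I * ((inner ℝ ξ x : ℝ) : ℂ))) μ := by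
  refine (integrable_const (1 : ℝ)).mono' (by fun_prop) (ae_of_all _ fun x ↦ ?_)
  rw [Complex.neg_two_mul_pi_mul_I_mul_ofReal, Complex.norm_exp_ofReal_mul_I]

theorem norm_mFT_sub_le (μ : Measure (EuclideanSpace ℝ (Fin d))) [IsFiniteMeasure μ] {R : ℝ}
    (hR : ∀ᵐ x ∂μ, ‖x‖ ≤ R) (ξ η : EuclideanSpace ℝ (Fin d)) :
    ‖mFT μ ξ - mFT μ η‖ ≤ 2 * Real.pi * R * μ.real Set.univ * ‖ξ - η‖ := by
  rw [mFT, mFT, ← integral_sub (integrable_fourierKernel μ ξ) (integrable_fourierKernel μ η)]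
  have hbound : ∀ᵐ x ∂μ, ‖Complex.exp (-2 * Real.pi * Complex.I * ((inner ℝ ξ x : ℝ) : ℂ))
      - Complex.exp (-2 * Real.pi * Complex.I * ((inner ℝ η x : ℝ) : ℂ))‖
      ≤ 2 * Real.pi * R * ‖ξ - η‖ := by
    filter_upwards [hR] with x hx
    rw [Complex.neg_two_mul_pi_mul_I_mul_ofReal, Complex.neg_two_mul_pi_mul_I_mul_ofReal]
    calc _ ≤ |-2 * Real.pi * inner ℝ ξ x - -2 * Real.pi * inner ℝ η x| :=
          Complex.norm_exp_ofReal_mul_I_sub_exp_ofReal_mul_I_le _ _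
      _ = 2 * Real.pi * |inner ℝ (ξ - η) x| := by
          rw [inner_sub_left, ← mul_sub, abs_mul, abs_of_neg (by linarith [Real.pi_pos])]
          ring
      _ ≤ 2 * Real.pi * (‖ξ - η‖ * ‖x‖) := by gcongr; exact abs_real_inner_le_norm _ _
      _ ≤ 2 * Real.pi * R * ‖ξ - η‖ := by
          rw [mul_comm ‖ξ - η‖, ← mul_assoc]
          gcongr
  exact (norm_integral_le_of_norm_le_const hbound).trans_eq (by ring)

theorem lipschitzWith_mFT (μ : Measure (EuclideanSpace ℝ (Fin d))) [IsFiniteMeasure μ] {R : ℝ}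
    (hR : ∀ᵐ x ∂μ, ‖x‖ ≤ R) :
    LipschitzWith (2 * Real.pi * R * μ.real Set.univ).toNNReal (mFT μ) :=
  LipschitzWith.of_dist_le' fun ξ η ↦ by
    simpa only [dist_eq_norm] using norm_mFT_sub_le μ hR ξ η

theorem fmFT_one (μ : Measure (EuclideanSpace ℝ (Fin d))) : fmFT (fun _ ↦ 1) μ = mFT μ := by
  ext ξ
  simp [fmFT, mFT]

end FourierTransform

theorem fourier_decay_of_restriction_general
    (d : ℕ) (μ : Measure (EuclideanSpace ℝ (Fin d))) [IsFiniteMeasure μ]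
    (hcs : ∃ K : Set (EuclideanSpace ℝ (Fin d)), IsCompact K ∧ μ Kᶜ = 0)
    (h : ∃ q : ℝ, 1 < q ∧ ∃ C : ℝ, 0 ≤ C ∧
      ∀ f : EuclideanSpace ℝ (Fin d) → ℂ, MemLp f 2 μ →
        eLpNorm (fmFT f μ) (ENNReal.ofReal q) volume ≤ ENNReal.ofReal C * eLpNorm f 2 μ) :
    Filter.Tendsto (mFT μ) (Filter.comap norm Filter.atTop) (nhds 0) := by
  obtain ⟨K, hK, hKμ⟩ := hcs
  obtain ⟨R, hKR⟩ := hK.isBounded.subset_closedBall 0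
  have hR : ∀ᵐ x ∂μ, ‖x‖ ≤ R := by
    filter_upwards [mem_ae_iff.2 hKμ] with x hx
    simpa using hKR hx
  have hlip := lipschitzWith_mFT μ hR
  obtain ⟨q, hq, C, -, hC⟩ := h
  have hmem : MemLp (mFT μ) (ENNReal.ofReal q) volume := by
    refine ⟨hlip.continuous.aestronglyMeasurable, ?_⟩
    have := hC _ (memLp_const 1)
    rw [fmFT_one] at this
    exact this.trans_lt (mul_lt_top ofReal_lt_top (memLp_const 1).2)
  rw [comap_norm_atTop]
  exact hmem.tendsto_zero_cobounded_of_uniformContinuous (ofReal_pos.2 (by linarith)).ne'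
    ofReal_ne_top hlip.uniformContinuous

/-- If an `L²(μ) → L^q` extension estimate holds for some `q > 1`, then `μ̂` decays at infinity. -/
theorem fourier_decay_of_restriction
    (d : ℕ) (μ : Measure (EuclideanSpace ℝ (Fin d))) [IsFiniteMeasure μ] (hμ0 : μ ≠ 0)
    (hcs : ∃ K : Set (EuclideanSpace ℝ (Fin d)), IsCompact K ∧ μ Kᶜ = 0)
    (h : ∃ q : ℝ, 1 < q ∧ ∃ C : ℝ, 0 ≤ C ∧
      ∀ f : EuclideanSpace ℝ (Fin d) → ℂ, MemLp f 2 μ →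
        eLpNorm (fmFT f μ) (ENNReal.ofReal q) volume ≤ ENNReal.ofReal C * eLpNorm f 2 μ) :
    Filter.Tendsto (mFT μ) (Filter.comap norm Filter.atTop) (nhds 0) :=
  fourier_decay_of_restriction_general d μ hcs h
end

section
/- Let d ≥ 1 be an integer, let μ be a non-zero, finite, compactly supported Borel measure on ℝ^d, and let 0 < s < d be such that ∫_{|ξ|≥1} |μ̂(ξ)|² |ξ|^{s−d} dξ = ∞. Then for every q with 2 ≤ q < 2d/s one has ∫_{|ξ|≥1} |μ̂(ξ)|^q dξ = ∞; in particular μ̂ ∉ L^q(ℝ^d) for all such q. -/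
/-!
On `{‖ξ‖ ≥ 1}`, Young's inequality with exponents `q/2` and `r = (1 - 2/q)⁻¹` gives
`|μ̂ ξ|² ‖ξ‖^(s-d) ≤ |μ̂ ξ|^q + ‖ξ‖^((s-d) r)`, and `(s - d) r < -d` is equivalent to `q s < 2 d`,
so the last term is integrable at infinity. A finite `∫ |μ̂|^q` would therefore make the weighted
`L²` integral finite. For `q = 2` the weight `‖ξ‖^(s-d)` is simply at most `1`.
-/

open MeasureTheory ENNReal

theorem Real.mul_le_rpow_add_rpow {a b p r : ℝ} (ha : 0 ≤ a) (hb : 0 ≤ b)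
    (hpr : p.HolderConjugate r) : a * b ≤ a ^ p + b ^ r :=
  calc a * b ≤ a ^ p / p + b ^ r / r := Real.young_inequality_of_nonneg ha hb hpr
    _ ≤ a ^ p + b ^ r := add_le_add (div_le_self (by positivity) hpr.lt.le)
        (div_le_self (by positivity) hpr.symm.lt.le)

theorem MeasureTheory.lintegral_rpow_eq_top_of_lintegral_mul_eq_top {α : Type*}
    [MeasurableSpace α] {μ : Measure α} {f g : α → ℝ} {p r : ℝ} (hpr : p.HolderConjugate r)
    (hf : 0 ≤ f) (hg : 0 ≤ g) (hgm : AEMeasurable g μ)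
    (hfg : ∫⁻ a, ENNReal.ofReal (f a * g a) ∂μ = ⊤)
    (hgr : ∫⁻ a, ENNReal.ofReal (g a ^ r) ∂μ ≠ ⊤) :
    ∫⁻ a, ENNReal.ofReal (f a ^ p) ∂μ = ⊤ := by
  by_contra hfp
  refine ENNReal.add_ne_top.2 ⟨hfp, hgr⟩ (top_unique ?_)
  calc ⊤ = ∫⁻ a, ENNReal.ofReal (f a * g a) ∂μ := hfg.symm
    _ ≤ ∫⁻ a, ENNReal.ofReal (f a ^ p) + ENNReal.ofReal (g a ^ r) ∂μ :=
        lintegral_mono fun a => (ENNReal.ofReal_le_ofReal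
          (Real.mul_le_rpow_add_rpow (hf a) (hg a) hpr)).trans ENNReal.ofReal_add_le
    _ = _ := lintegral_add_right' _ (hgm.pow_const r).ennreal_ofReal

theorem MeasureTheory.not_memLp_of_setLIntegral_norm_rpow_eq_top {α F : Type*}
    [MeasurableSpace α] {μ : Measure α} [NormedAddCommGroup F] {f : α → F} {q : ℝ} {S : Set α}
    (hq : 0 < q) (h : ∫⁻ a in S, ENNReal.ofReal (‖f a‖ ^ q) ∂μ = ⊤) :
    ¬ MemLp f (ENNReal.ofReal q) μ := by
  intro hf
  have hfin := lintegral_rpow_enorm_lt_top_of_eLpNorm_lt_top (ENNReal.ofReal_pos.2 hq).ne'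
    ENNReal.ofReal_ne_top hf.2
  rw [ENNReal.toReal_ofReal hq.le] at hfin
  refine hfin.ne (top_unique (h ▸ (setLIntegral_le_lintegral S _).trans_eq' ?_))
  refine lintegral_congr fun a => ?_
  rw [← ofReal_norm, ENNReal.ofReal_rpow_of_nonneg (norm_nonneg _) hq.le]

section FiniteDimensional

open Module

variable {E : Type*} [NormedAddCommGroup E] [NormedSpace ℝ E] [FiniteDimensional ℝ E]
  [MeasurableSpace E] [BorelSpace E] (μ : Measure E) [μ.IsAddHaarMeasure]

theorem setLIntegral_one_le_norm_rpow_lt_top {t : ℝ} (ht : t < -(finrank ℝ E : ℝ)) :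
    ∫⁻ x in {x : E | 1 ≤ ‖x‖}, ENNReal.ofReal (‖x‖ ^ t) ∂μ < ⊤ := by
  have hbracket := finite_integral_one_add_norm (μ := μ) (r := -t) (by linarith)
  rw [neg_neg] at hbracket
  have hcompare : ∀ x ∈ {x : E | 1 ≤ ‖x‖},
      ENNReal.ofReal (‖x‖ ^ t) ≤
        ENNReal.ofReal (2 ^ (-t)) * ENNReal.ofReal ((1 + ‖x‖) ^ t) := by
    intro x (hx : 1 ≤ ‖x‖)
    rw [← ENNReal.ofReal_mul (by positivity)]
    refine ENNReal.ofReal_le_ofReal ?_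
    calc ‖x‖ ^ t = 2 ^ (-t) * (2 * ‖x‖) ^ t := by
          rw [Real.mul_rpow zero_le_two (by positivity), ← mul_assoc, ← Real.rpow_add two_pos]
          simp
      _ ≤ 2 ^ (-t) * (1 + ‖x‖) ^ t := by
          gcongr 2 ^ (-t) * ?_
          exact Real.rpow_le_rpow_of_nonpos (by positivity) (by linarith) (by linarith)
  calc _ ≤ ∫⁻ x in {x : E | 1 ≤ ‖x‖},
          ENNReal.ofReal (2 ^ (-t)) * ENNReal.ofReal ((1 + ‖x‖) ^ t) ∂μ :=
        setLIntegral_mono' (measurableSet_le measurable_const measurable_norm) hcompare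
    _ ≤ ∫⁻ x, ENNReal.ofReal (2 ^ (-t)) * ENNReal.ofReal ((1 + ‖x‖) ^ t) ∂μ :=
        setLIntegral_le_lintegral _ _
    _ < ⊤ := by
        rw [lintegral_const_mul' _ _ ENNReal.ofReal_ne_top]
        exact ENNReal.mul_lt_top ENNReal.ofReal_lt_top hbracket

theorem setLIntegral_norm_rpow_eq_top_of_weighted_sq_eq_top {F : Type*} [NormedAddCommGroup F]
    (f : E → F) {s q : ℝ} (hs : 0 < s) (hq2 : 2 ≤ q) (hqs : q < 2 * finrank ℝ E / s)
    (h : ∫⁻ ξ in {ξ : E | 1 ≤ ‖ξ‖}, ENNReal.ofReal (‖f ξ‖ ^ 2 * ‖ξ‖ ^ (s - finrank ℝ E)) ∂μ = ⊤) :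
    ∫⁻ ξ in {ξ : E | 1 ≤ ‖ξ‖}, ENNReal.ofReal (‖f ξ‖ ^ q) ∂μ = ⊤ := by
  set n : ℝ := (finrank ℝ E : ℝ)
  have hS : MeasurableSet {ξ : E | 1 ≤ ‖ξ‖} := measurableSet_le measurable_const measurable_norm
  have hsq : s < 2 * n / q := by
    rw [lt_div_iff₀ (by linarith)]
    rw [lt_div_iff₀ hs] at hqs
    linarith
  rcases hq2.eq_or_lt with rfl | hq2
  · refine top_unique (h ▸ setLIntegral_mono' hS fun ξ (hξ : 1 ≤ ‖ξ‖) => ?_)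
    refine ENNReal.ofReal_le_ofReal ?_
    rw [Real.rpow_two]
    exact mul_le_of_le_one_right (by positivity)
      (Real.rpow_le_one_of_one_le_of_nonpos hξ (by linarith))
  · have hq2' : 0 < 1 - 2 / q := sub_pos.2 ((div_lt_one (by linarith)).2 hq2)
    have hr : (q / 2).HolderConjugate (1 - 2 / q)⁻¹ := by
      simpa using Real.HolderConjugate.inv_one_sub_inv (a := 2 / q) (by positivity) (by linarith)
    have hweight : ∫⁻ ξ in {ξ : E | 1 ≤ ‖ξ‖},
        ENNReal.ofReal ((‖ξ‖ ^ (s - n)) ^ (1 - 2 / q)⁻¹) ∂μ ≠ ⊤ := by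
      simp_rw [← Real.rpow_mul (norm_nonneg _)]
      refine (setLIntegral_one_le_norm_rpow_lt_top μ ?_).ne
      rw [← div_eq_mul_inv, div_lt_iff₀ hq2']
      linarith [show -n * (1 - 2 / q) = -n + 2 * n / q by ring]
    calc _ = ∫⁻ ξ in {ξ : E | 1 ≤ ‖ξ‖}, ENNReal.ofReal ((‖f ξ‖ ^ 2) ^ (q / 2)) ∂μ := by
          refine lintegral_congr fun ξ => ?_
          rw [← Real.rpow_natCast, ← Real.rpow_mul (norm_nonneg _), Nat.cast_ofNat,
            mul_div_cancel₀ q two_ne_zero]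
      _ = ⊤ := lintegral_rpow_eq_top_of_lintegral_mul_eq_top hr (fun _ => by positivity)
          (fun _ => by positivity) (by fun_prop) h hweight

end FiniteDimensional

theorem hambrook_laba_general
    (d : ℕ)
    (μ : Measure (EuclideanSpace ℝ (Fin d)))
    (s : ℝ) (hs0 : 0 < s)
    (h : (∫⁻ ξ in {ξ : EuclideanSpace ℝ (Fin d) | 1 ≤ ‖ξ‖},
        ENNReal.ofReal (‖mFT μ ξ‖ ^ 2 * ‖ξ‖ ^ (s - (d:ℝ)))) = ⊤) :
    ∀ q : ℝ, 2 ≤ q → q < 2 * d / s →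
      (∫⁻ ξ in {ξ : EuclideanSpace ℝ (Fin d) | 1 ≤ ‖ξ‖},
        ENNReal.ofReal (‖mFT μ ξ‖ ^ q)) = ⊤ ∧
      ¬ MemLp (mFT μ) (ENNReal.ofReal q) volume := by
  intro q hq2 hqs
  have hdiv : ∫⁻ ξ in {ξ : EuclideanSpace ℝ (Fin d) | 1 ≤ ‖ξ‖},
      ENNReal.ofReal (‖mFT μ ξ‖ ^ q) = ⊤ :=
    setLIntegral_norm_rpow_eq_top_of_weighted_sq_eq_top volume (mFT μ) hs0 hq2
      (by rwa [finrank_euclideanSpace_fin]) (by rwa [finrank_euclideanSpace_fin])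
  exact ⟨hdiv, not_memLp_of_setLIntegral_norm_rpow_eq_top (by linarith) hdiv⟩

/-- Hambrook–Łaba observation: if the weighted `L²` integral of `μ̂` diverges,
then `μ̂ ∉ L^q` for `2 ≤ q < 2d/s`. -/
theorem hambrook_laba
    (d : ℕ) (hd : 1 ≤ d)
    (μ : Measure (EuclideanSpace ℝ (Fin d))) [IsFiniteMeasure μ] (hμ0 : μ ≠ 0)
    (hcs : ∃ K : Set (EuclideanSpace ℝ (Fin d)), IsCompact K ∧ μ Kᶜ = 0)
    (s : ℝ) (hs0 : 0 < s) (hsd : s < d)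
    (h : (∫⁻ ξ in {ξ : EuclideanSpace ℝ (Fin d) | 1 ≤ ‖ξ‖},
        ENNReal.ofReal (‖mFT μ ξ‖ ^ 2 * ‖ξ‖ ^ (s - (d:ℝ)))) = ⊤) :
    ∀ q : ℝ, 2 ≤ q → q < 2 * d / s →
      (∫⁻ ξ in {ξ : EuclideanSpace ℝ (Fin d) | 1 ≤ ‖ξ‖},
        ENNReal.ofReal (‖mFT μ ξ‖ ^ q)) = ⊤ ∧
      ¬ MemLp (mFT μ) (ENNReal.ofReal q) volume :=
  hambrook_laba_general d μ s hs0 h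
end

section
/- Let d ≥ 1 be an integer and let μ be a non-zero, finite, compactly supported Borel measure on ℝ^d such that ∫_{ℝ^d} |μ̂(ξ)|^{2/θ} dξ = ∞ for every θ ∈ (0,1] (i.e. J_{dθ,θ}(μ) = ∞ for all θ ∈ (0,1]). Then for every p ∈ [1,∞] and every q ∈ [1,∞) there is no constant C ≥ 0 such that ‖(fμ)^‖_{L^q(ℝ^d)} ≤ C ‖f‖_{L^p(μ)} holds for all f ∈ L^p(μ). -/
open MeasureTheory ENNReal

/-!
Testing the extension estimate on `f = 1` shows `μ̂ ∈ L^q`. Since `|μ̂| ≤ μ(ℝ^d)`, a bounded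
function in `L^q` lies in every `L^r` with `r ≥ q`; taking `r = max q 2 = 2/θ` with `θ ∈ (0,1]`
contradicts `∫ |μ̂|^{2/θ} = ∞`.
-/

section Lp

variable {α E : Type*} [MeasurableSpace α] [NormedAddCommGroup E] {ν : Measure α}

lemma lintegral_ofReal_norm_rpow {r : ℝ} (hr : 0 ≤ r) (g : α → E) :
    ∫⁻ x, ENNReal.ofReal (‖g x‖ ^ r) ∂ν = ∫⁻ x, ‖g x‖ₑ ^ r ∂ν := by
  refine lintegral_congr fun x => ?_
  rw [← ENNReal.ofReal_rpow_of_nonneg (norm_nonneg _) hr, ofReal_norm]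

lemma eLpNorm_lt_top_of_le_exponent_of_bounded {p q M : ℝ≥0∞} {g : α → E}
    (hp : p ≠ 0) (hq : q ≠ ⊤) (hpq : p ≤ q) (hM : ∀ x, ‖g x‖ₑ ≤ M) (hM_top : M ≠ ⊤)
    (hg : eLpNorm g p ν < ⊤) : eLpNorm g q ν < ⊤ := by
  have hp_top : p ≠ ⊤ := ne_top_of_le_ne_top hq hpq
  have hpq' : p.toReal ≤ q.toReal := toReal_mono hq hpq
  rw [eLpNorm_lt_top_iff_lintegral_rpow_enorm_lt_top hp hp_top] at hg
  rw [eLpNorm_lt_top_iff_lintegral_rpow_enorm_lt_top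
    (pos_iff_ne_zero.2 hp |>.trans_le hpq).ne' hq]
  have hpointwise : ∀ x, ‖g x‖ₑ ^ q.toReal ≤ M ^ (q.toReal - p.toReal) * ‖g x‖ₑ ^ p.toReal := by
    intro x
    calc ‖g x‖ₑ ^ q.toReal = ‖g x‖ₑ ^ (q.toReal - p.toReal) * ‖g x‖ₑ ^ p.toReal := by
          rw [← ENNReal.rpow_add_of_nonneg _ _ (sub_nonneg.2 hpq') toReal_nonneg, sub_add_cancel]
      _ ≤ M ^ (q.toReal - p.toReal) * ‖g x‖ₑ ^ p.toReal := by
          gcongr; exact hM x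
  calc ∫⁻ x, ‖g x‖ₑ ^ q.toReal ∂ν
      ≤ ∫⁻ x, M ^ (q.toReal - p.toReal) * ‖g x‖ₑ ^ p.toReal ∂ν := lintegral_mono hpointwise
    _ = M ^ (q.toReal - p.toReal) * ∫⁻ x, ‖g x‖ₑ ^ p.toReal ∂ν :=
        lintegral_const_mul' _ _ (rpow_ne_top_of_nonneg (sub_nonneg.2 hpq') hM_top)
    _ < ⊤ := mul_lt_top (rpow_lt_top_of_nonneg (sub_nonneg.2 hpq') hM_top) hg

end Lp

section Fourier

variable {d : ℕ} (μ : Measure (EuclideanSpace ℝ (Fin d)))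

lemma fmFT_const_one : fmFT (fun _ => (1 : ℂ)) μ = mFT μ := by
  funext ξ
  simp only [fmFT, mFT, mul_one]

lemma enorm_mFT_le (ξ : EuclideanSpace ℝ (Fin d)) : ‖mFT μ ξ‖ₑ ≤ μ Set.univ :=
  calc ‖mFT μ ξ‖ₑ
      ≤ ∫⁻ x, ‖Complex.exp (-2 * Real.pi * Complex.I * ((inner ℝ ξ x : ℝ) : ℂ))‖ₑ ∂μ :=
        enorm_integral_le_lintegral_enorm _
    _ = ∫⁻ _, 1 ∂μ := by
        refine lintegral_congr fun x => ?_
        rw [← ofReal_norm, Complex.norm_exp]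
        simp
    _ = μ Set.univ := lintegral_one

end Fourier

theorem extension_fails_for_all_exponents_general
    (d : ℕ)
    (μ : Measure (EuclideanSpace ℝ (Fin d))) [IsFiniteMeasure μ]
    (hJ : ∀ θ : ℝ, 0 < θ → θ ≤ 1 →
      (∫⁻ ξ, ENNReal.ofReal (‖mFT μ ξ‖ ^ (2/θ))) = ⊤) :
    ∀ p : ℝ≥0∞, 1 ≤ p → ∀ q : ℝ, 1 ≤ q → ∀ C : ℝ, 0 ≤ C →
      ¬ (∀ f : EuclideanSpace ℝ (Fin d) → ℂ, MemLp f p μ →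
          eLpNorm (fmFT f μ) (ENNReal.ofReal q) volume ≤
            ENNReal.ofReal C * eLpNorm f p μ) := by
  intro p _ q hq C _ hext
  have hone : MemLp (fun _ => (1 : ℂ)) p μ := memLp_const 1
  have hq_fin : eLpNorm (mFT μ) (ENNReal.ofReal q) volume < ⊤ := by
    rw [← fmFT_const_one]
    exact (hext _ hone).trans_lt (mul_lt_top ofReal_lt_top hone.eLpNorm_lt_top)
  set r := max q 2
  have hr : 0 < r := lt_max_of_lt_right two_pos
  have hr_fin : eLpNorm (mFT μ) (ENNReal.ofReal r) volume < ⊤ :=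
    eLpNorm_lt_top_of_le_exponent_of_bounded (ofReal_pos.2 (by linarith)).ne' ofReal_ne_top
      (ofReal_le_ofReal (le_max_left _ _)) (enorm_mFT_le μ) (measure_ne_top μ _) hq_fin
  have hr_inf := hJ (2 / r) (by positivity) ((div_le_one hr).2 (le_max_right _ _))
  rw [div_div_cancel₀ two_ne_zero, lintegral_ofReal_norm_rpow hr.le] at hr_inf
  rw [eLpNorm_lt_top_iff_lintegral_rpow_enorm_lt_top (ofReal_pos.2 hr).ne' ofReal_ne_top,
    toReal_ofReal hr.le] at hr_fin
  exact hr_fin.ne hr_inf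

/-- If `J_{dθ,θ}(μ) = ∞` for all `θ ∈ (0,1]`, then no `L^p(μ) → L^q` extension
estimate holds for any `p ∈ [1,∞]` and finite `q`. -/
theorem extension_fails_for_all_exponents
    (d : ℕ) (hd : 1 ≤ d)
    (μ : Measure (EuclideanSpace ℝ (Fin d))) [IsFiniteMeasure μ] (hμ0 : μ ≠ 0)
    (hcs : ∃ K : Set (EuclideanSpace ℝ (Fin d)), IsCompact K ∧ μ Kᶜ = 0)
    (hJ : ∀ θ : ℝ, 0 < θ → θ ≤ 1 →
      (∫⁻ ξ, ENNReal.ofReal (‖mFT μ ξ‖ ^ (2/θ))) = ⊤) :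
    ∀ p : ℝ≥0∞, 1 ≤ p → ∀ q : ℝ, 1 ≤ q → ∀ C : ℝ, 0 ≤ C →
      ¬ (∀ f : EuclideanSpace ℝ (Fin d) → ℂ, MemLp f p μ →
          eLpNorm (fmFT f μ) (ENNReal.ofReal q) volume ≤
            ENNReal.ofReal C * eLpNorm f p μ) :=
  extension_fails_for_all_exponents_general d μ hJ
end
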